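/- If w contains the pattern 3412 at positions i_1 < i_2 < i_3 < i_4 (so w(i_3) < w(i_4) < w(i_1) < w(i_2)), then the pair (e, w) is divisible after position i_2, i.e. |{1,...,i_2} ∩ {w(1),...,w(i_2)}| ≤ i_2 - 2. -/

import Mathlib

/- Put `k = i₂ + 1`. Both `{1,…,k}` and `w[1,k]` have `k` elements, so it suffices to find two
elements of one of them outside the other. If `w(i₁) ≤ k`, the smaller values `w(i₃), w(i₄)` lie in
`{1,…,k}` but, sitting at positions after `i₂`, not in `w[1,k]`; otherwise `w(i₁) < w(i₂)` both
exceed `k` and lie in `w[1,k]`. -/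

open Equiv

/-- one-line notation (1-based values) of a permutation of `Fin n` -/
def oneLine {n : ℕ} (w : Perm (Fin n)) : List ℕ := List.ofFn fun i => (w i).val + 1

/-- `w` contains the pattern given by the list `p` (distinct positive integers
in one-line notation): some subsequence of `w` has the same relative order. -/
def ContainsPat {n : ℕ} (w : Perm (Fin n)) (p : List ℕ) : Prop :=
  ∃ f : Fin p.length → Fin n, StrictMono f ∧
    ∀ i j : Fin p.length, p.get i < p.get j ↔ w (f i) < w (f j)

/-- Coxeter length of a permutation = number of inversions -/
def len {n : ℕ} (w : Perm (Fin n)) : ℕ :=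
  (Finset.univ.filter fun q : Fin n × Fin n => q.1 < q.2 ∧ w q.2 < w q.1).card

/-- the simple generators `s_i = (i, i+1)` that are left descents of `w` -/
def descentGens {n : ℕ} (w : Perm (Fin n)) : Set (Perm (Fin n)) :=
  {u | ∃ i j : Fin n, (i : ℕ) + 1 = (j : ℕ) ∧ u = Equiv.swap i j ∧ w⁻¹ j < w⁻¹ i}

/-- `v` is the longest element `w₀(J(w))` of the parabolic subgroup generated by
the left descents of `w` -/
def IsW0J {n : ℕ} (w v : Perm (Fin n)) : Prop :=
  v ∈ Subgroup.closure (descentGens w) ∧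
    ∀ u ∈ Subgroup.closure (descentGens w), len u ≤ len v

/-- `v[1,i]`: the set of values in the first `i` positions (`i` is 1-based) -/
def prefSet {n : ℕ} (v : Perm (Fin n)) (i : ℕ) : Finset (Fin n) :=
  (Finset.univ.filter fun j : Fin n => (j : ℕ) < i).image v

/-- `(v,w)` is divisible after position `i` : `|v[1,i] ∩ w[1,i]| ≤ i - 2` -/
def DivisibleAfter {n : ℕ} (v w : Perm (Fin n)) (i : ℕ) : Prop :=
  (prefSet v i ∩ prefSet w i).card + 2 ≤ i

/-- `(v,w)` is divisible at position `i` : `v(i) = w(i)` and `|v[1,i] ∩ w[1,i]| ≤ i - 1` -/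
def DivisibleAt {n : ℕ} (v w : Perm (Fin n)) (i : ℕ) : Prop :=
  ∃ h : i - 1 < n, v ⟨i - 1, h⟩ = w ⟨i - 1, h⟩ ∧ (prefSet v i ∩ prefSet w i).card + 1 ≤ i

/-- `(v,w)` is divisible at or after some position `1 ≤ i ≤ n` -/
def Divisible {n : ℕ} (v w : Perm (Fin n)) : Prop :=
  ∃ i : ℕ, 1 ≤ i ∧ i ≤ n ∧ (DivisibleAfter v w i ∨ DivisibleAt v w i)

def pat321 : List ℕ := [3, 2, 1]
def pat3412 : List ℕ := [3, 4, 1, 2]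

def P321L : List (List ℕ) :=
  [[2,4,5,3,1],[2,5,3,1,4],[2,5,3,4,1],[4,2,5,3,1],[4,5,2,3,1],[4,5,3,1,2],
   [5,2,3,1,4],[5,2,3,4,1],[5,3,1,2,4],[5,3,1,4,2],[5,3,4,1,2]]

def P3412L : List (List ℕ) :=
  [[3,4,5,1,2],[3,4,5,2,1],[3,5,4,1,2],[3,5,4,2,1],[4,5,1,2,3],[4,5,2,1,3],
   [4,5,2,3,1],[5,3,4,1,2],[5,3,4,2,1],[5,4,1,2,3],[5,4,2,1,3],[5,4,2,3,1]]

def PL : List (List ℕ) :=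
  [[2,4,5,3,1],[2,5,3,1,4],[2,5,3,4,1],[3,4,5,1,2],[3,4,5,2,1],[3,5,4,1,2],[3,5,4,2,1],
   [4,2,5,3,1],[4,5,1,2,3],[4,5,2,1,3],[4,5,2,3,1],[4,5,3,1,2],[5,2,3,1,4],[5,2,3,4,1],
   [5,3,1,2,4],[5,3,1,4,2],[5,3,4,1,2],[5,3,4,2,1],[5,4,1,2,3],[5,4,2,1,3],[5,4,2,3,1]]

/-- Bruhat order: generated by covers `a ⋖ a·t` with `t` a transposition and
`ℓ(a·t) = ℓ(a) + 1` -/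
def BruhatLE {n : ℕ} (v w : Perm (Fin n)) : Prop :=
  Relation.ReflTransGen
    (fun a b => (∃ x y : Fin n, x ≠ y ∧ b = a * Equiv.swap x y) ∧ len b = len a + 1) v w

/-- product of a word in the simple generators `s_i = (i, i+1)` -/
def wordProd {n : ℕ} (l : List {i : ℕ // i + 1 < n}) : Perm (Fin n) :=
  (l.map fun i => Equiv.swap (⟨i.1, Nat.lt_of_succ_lt i.2⟩ : Fin n) ⟨i.1 + 1, i.2⟩).prod

/-- `l` is a reduced word for `w`: a minimal-length expression of `w` as a
product of simple generators -/
def IsReducedWord {n : ℕ} (w : Perm (Fin n)) (l : List {i : ℕ // i + 1 < n}) : Prop :=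
  wordProd l = w ∧
    ∀ l' : List {i : ℕ // i + 1 < n}, wordProd l' = w → l.length ≤ l'.length

lemma Finset.card_inter_add_two_le {α : Type*} [DecidableEq α] {s t : Finset α} {a b : α}
    (hab : a ≠ b) (ha : a ∈ s \ t) (hb : b ∈ s \ t) : (s ∩ t).card + 2 ≤ s.card := by
  calc (s ∩ t).card + 2 = (s ∩ t).card + ({a, b} : Finset α).card := by
        rw [Finset.card_pair hab]
    _ ≤ (s ∩ t).card + (s \ t).card := by
        gcongr
        exact Finset.insert_subset ha (Finset.singleton_subset_iff.2 hb)
    _ = s.card := Finset.card_inter_add_card_sdiff s t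

section prefSet

variable {n : ℕ}

lemma card_prefSet (v : Perm (Fin n)) {k : ℕ} (hk : k ≤ n) : (prefSet v k).card = k := by
  rw [prefSet, Finset.card_image_of_injective _ v.injective]
  simpa [Fin.card_filter_val_lt] using hk

lemma mem_prefSet_one {k : ℕ} {x : Fin n} : x ∈ prefSet 1 k ↔ (x : ℕ) < k := by
  simp [prefSet]

lemma apply_mem_prefSet_iff (v : Perm (Fin n)) {k : ℕ} {j : Fin n} :
    v j ∈ prefSet v k ↔ (j : ℕ) < k := by
  simp [prefSet]

end prefSet

theorem stmt7 (n : ℕ) (w : Perm (Fin n)) (i₁ i₂ i₃ i₄ : Fin n)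
    (h12 : i₁ < i₂) (h23 : i₂ < i₃) (h34 : i₃ < i₄)
    (h1 : w i₃ < w i₄) (h2 : w i₄ < w i₁) (h3 : w i₁ < w i₂) :
    DivisibleAfter 1 w ((i₂ : ℕ) + 1) := by
  have hk : (i₂ : ℕ) + 1 ≤ n := i₂.isLt
  unfold DivisibleAfter
  by_cases hc : (w i₁ : ℕ) < i₂ + 1
  · refine (Finset.card_inter_add_two_le h1.ne ?_ ?_).trans (card_prefSet 1 hk).le <;>
      simp only [Finset.mem_sdiff, mem_prefSet_one, apply_mem_prefSet_iff] <;> omega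
  · rw [Finset.inter_comm]
    refine (Finset.card_inter_add_two_le h3.ne ?_ ?_).trans (card_prefSet w hk).le <;>
      simp only [Finset.mem_sdiff, mem_prefSet_one, apply_mem_prefSet_iff] <;> omega
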